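/- arXiv:1001.0535 — 13 statements merged into one kernel-verified Lean document; each statement's English description precedes it below -/
import Mathlib

section
/- For nonnegative real numbers a, b and ν ∈ [0,1], with r = min{ν, 1−ν}, we have (1−ν)a + νb ≥ a^(1−ν) b^ν + r(√a − √b)². -/
theorem refined_young_scalar (a b ν : ℝ) (ha : 0 ≤ a) (hb : 0 ≤ b)
    (hν : ν ∈ Set.Icc (0:ℝ) 1) (r : ℝ) (hr : r = min ν (1 - ν)) :
    a ^ (1 - ν) * b ^ ν + r * (Real.sqrt a - Real.sqrt b) ^ 2 ≤ (1 - ν) * a + ν * b := by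
  obtain ⟨h0, h1⟩ := hν
  have hsa := Real.sq_sqrt ha
  have hsb := Real.sq_sqrt hb
  have hna := Real.sqrt_nonneg a
  have hnb := Real.sqrt_nonneg b
  rcases eq_or_lt_of_le h0 with h0' | h0'
  · subst hr; rw [← h0']; simp [Real.rpow_zero]
  rcases eq_or_lt_of_le h1 with h1' | h1'
  · subst hr; rw [h1']; simp [Real.rpow_zero]
  have hab : (0:ℝ) ≤ Real.sqrt a * Real.sqrt b := mul_nonneg hna hnb
  rcases le_total ν (1/2) with hc | hc
  · -- r = ν
    have hrν : r = ν := by rw [hr, min_eq_left]; linarith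
    have key : a ^ (1 - 2*ν) * (Real.sqrt a * Real.sqrt b) ^ (2*ν)
        ≤ (1 - 2*ν) * a + (2*ν) * (Real.sqrt a * Real.sqrt b) :=
      Real.geom_mean_le_arith_mean2_weighted (by linarith) (by linarith) ha hab (by ring)
    have e1 : (Real.sqrt a * Real.sqrt b) ^ (2*ν) = a ^ ν * b ^ ν := by
      rw [Real.mul_rpow hna hnb, Real.sqrt_eq_rpow, Real.sqrt_eq_rpow,
        ← Real.rpow_mul ha, ← Real.rpow_mul hb]
      ring_nf
    have e2 : a ^ (1 - 2*ν) * a ^ ν = a ^ (1 - ν) := by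
      rw [← Real.rpow_add' ha (by intro h; apply absurd h; intro h; linarith)]
      ring_nf
    have e3 : a ^ (1 - ν) * b ^ ν ≤ (1 - 2*ν) * a + (2*ν) * (Real.sqrt a * Real.sqrt b) := by
      calc a ^ (1 - ν) * b ^ ν = a ^ (1 - 2*ν) * (a ^ ν * b ^ ν) := by rw [← mul_assoc, e2]
        _ = a ^ (1 - 2*ν) * (Real.sqrt a * Real.sqrt b) ^ (2*ν) := by rw [e1]
        _ ≤ _ := key
    nlinarith [e3, hsa, hsb]
  · -- r = 1 - ν
    have hrν : r = 1 - ν := by rw [hr, min_eq_right]; linarith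
    have key : b ^ (2*ν - 1) * (Real.sqrt a * Real.sqrt b) ^ (2 - 2*ν)
        ≤ (2*ν - 1) * b + (2 - 2*ν) * (Real.sqrt a * Real.sqrt b) :=
      Real.geom_mean_le_arith_mean2_weighted (by linarith) (by linarith) hb hab (by ring)
    have e1 : (Real.sqrt a * Real.sqrt b) ^ (2 - 2*ν) = a ^ (1 - ν) * b ^ (1 - ν) := by
      rw [Real.mul_rpow hna hnb, Real.sqrt_eq_rpow, Real.sqrt_eq_rpow,
        ← Real.rpow_mul ha, ← Real.rpow_mul hb]
      ring_nf
    have e2 : b ^ (2*ν - 1) * b ^ (1 - ν) = b ^ ν := by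
      rw [← Real.rpow_add' hb (by intro h; apply absurd h; intro h; linarith)]
      ring_nf
    have e3 : a ^ (1 - ν) * b ^ ν ≤ (2*ν - 1) * b + (2 - 2*ν) * (Real.sqrt a * Real.sqrt b) := by
      calc a ^ (1 - ν) * b ^ ν = b ^ (2*ν - 1) * (a ^ (1 - ν) * b ^ (1 - ν)) := by
            rw [mul_comm (b ^ (2*ν-1)), mul_assoc, mul_comm (b ^ (1-ν)), e2]
        _ = b ^ (2*ν - 1) * (Real.sqrt a * Real.sqrt b) ^ (2 - 2*ν) := by rw [e1]
        _ ≤ _ := key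
    nlinarith [e3, hsa, hsb]
end

section
/- For every positive real t and every ν ∈ [0,1], with r = min{ν, 1−ν}, we have ν t + (1−ν) ≥ t^ν + r(√t − 1)² = t^ν + r(t − 2√t + 1). -/
theorem refined_young_one_var (t ν : ℝ) (ht : 0 < t) (hν : ν ∈ Set.Icc (0:ℝ) 1)
    (r : ℝ) (hr : r = min ν (1 - ν)) :
    t ^ ν + r * (Real.sqrt t - 1) ^ 2 ≤ ν * t + (1 - ν) ∧
      t ^ ν + r * (Real.sqrt t - 1) ^ 2 = t ^ ν + r * (t - 2 * Real.sqrt t + 1) := by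
  obtain ⟨h0, h1⟩ := hν
  have hst : Real.sqrt t ^ 2 = t := Real.sq_sqrt ht.le
  have hs0 : 0 ≤ Real.sqrt t := Real.sqrt_nonneg t
  constructor
  · rcases le_total ν (1 - ν) with hc | hc
    · have hrv : r = ν := by rw [hr, min_eq_left hc]
      have key : Real.sqrt t ^ (2 * ν) * (1:ℝ) ^ (1 - 2 * ν) ≤
          2 * ν * Real.sqrt t + (1 - 2 * ν) * 1 :=
        Real.geom_mean_le_arith_mean2_weighted (by positivity) (by linarith)
          hs0 zero_le_one (by ring)
      have h1p : (1:ℝ) ^ (1 - 2 * ν) = 1 := Real.one_rpow _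
      have hpow : Real.sqrt t ^ (2 * ν) = t ^ ν := by
        rw [Real.sqrt_eq_rpow, ← Real.rpow_mul ht.le]
        congr 1; ring
      rw [h1p, hpow, mul_one] at key
      nlinarith [key, hst]
    · have hrv : r = 1 - ν := by rw [hr, min_eq_right hc]
      have key : t ^ (2 * ν - 1) * Real.sqrt t ^ (2 - 2 * ν) ≤
          (2 * ν - 1) * t + (2 - 2 * ν) * Real.sqrt t :=
        Real.geom_mean_le_arith_mean2_weighted (by linarith) (by linarith)
          ht.le hs0 (by ring)
      have hpow : t ^ (2 * ν - 1) * Real.sqrt t ^ (2 - 2 * ν) = t ^ ν := by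
        rw [Real.sqrt_eq_rpow, ← Real.rpow_mul ht.le, ← Real.rpow_add ht]
        norm_num
        ring_nf
      rw [hpow] at key
      nlinarith [key, hst]
  · have h2 : (Real.sqrt t - 1) ^ 2 = t - 2 * Real.sqrt t + 1 := by
      rw [sub_sq, hst]; ring
    rw [h2]
end

section
/- For positive invertible operators A, B and ν ∈ [0,1] with r = min{ν, 1−ν}, the refined Young inequality (1−ν)A + νB ≥ A♯_ν B + 2r((A+B)/2 − A♯_{1/2}B) holds in the Loewner order. -/
/-!
With `T = A^{-1/2} B A^{-1/2}` we have `A ♯_ν B = A^{1/2} T^ν A^{1/2}`, and conjugation by `A^{1/2}`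
is linear and monotone, so it suffices to treat `A = 1`, `B = T`. That case is the continuous
functional calculus of `T` applied to the scalar inequality
`x^ν + 2r((1 + x)/2 - √x) ≤ 1 - ν + νx` on `x ≥ 0`, which is weighted AM–GM for the pair `1, √x`
with weights `1 - 2ν, 2ν` when `ν ≤ 1/2`, and for the pair `x, √x` with weights `2ν - 1, 2 - 2ν`
when `ν ≥ 1/2`.
-/

variable {H : Type*} [NormedAddCommGroup H] [InnerProductSpace ℂ H] [CompleteSpace H]

/-- The weighted operator geometric mean `A ♯_ν B = A^{1/2} (A^{-1/2} B A^{-1/2})^ν A^{1/2}`. -/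
noncomputable def geomMean (A B : H →L[ℂ] H) (ν : ℝ) : H →L[ℂ] H :=
  A ^ ((1:ℝ)/2) * (A ^ (-(1:ℝ)/2) * B * A ^ (-(1:ℝ)/2)) ^ ν * A ^ ((1:ℝ)/2)

theorem Real.refined_young_inequality {ν x : ℝ} (hν₀ : 0 ≤ ν) (hν₁ : ν ≤ 1) (hx : 0 ≤ x) :
    x ^ ν + 2 * min ν (1 - ν) * ((1 + x) / 2 - x ^ (1 / 2 : ℝ)) ≤ (1 - ν) + ν * x := by
  set s := x ^ (1 / 2 : ℝ) with hs_def
  have hs : 0 ≤ s := by positivity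
  have hsx : s ^ 2 = x := by
    rw [← Real.rpow_natCast, hs_def, ← Real.rpow_mul hx]; norm_num
  rcases le_total ν (1 / 2) with hν | hν
  · have amgm := Real.geom_mean_le_arith_mean2_weighted (p₁ := 1) (p₂ := s)
      (by linarith) (by linarith) zero_le_one hs (by ring : 1 - 2 * ν + 2 * ν = 1)
    have hpow : s ^ (2 * ν) = x ^ ν := by rw [hs_def, ← Real.rpow_mul hx]; ring_nf
    rw [Real.one_rpow, one_mul, hpow] at amgm
    rw [min_eq_left (by linarith)]
    nlinarith
  · have amgm := Real.geom_mean_le_arith_mean2_weighted (p₁ := x) (p₂ := s)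
      (by linarith) (by linarith) hx hs (by ring : 2 * ν - 1 + (2 - 2 * ν) = 1)
    have hpow : x ^ (2 * ν - 1) * s ^ (2 - 2 * ν) = x ^ ν := by
      rw [hs_def, ← Real.rpow_mul hx, ← Real.rpow_add' hx (by linarith)]; ring_nf
    rw [hpow] at amgm
    rw [min_eq_right (by linarith)]
    nlinarith

namespace CFC

open Ring

variable {A : Type*} [PartialOrder A] [Ring A] [StarRing A] [TopologicalSpace A]
  [StarOrderedRing A] [Algebra ℝ A] [ContinuousFunctionalCalculus ℝ A IsSelfAdjoint]
  [NonnegSpectrumClass ℝ A] [IsSemitopologicalRing A] [T2Space A]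

theorem refined_young_inequality {a : A} (ha : 0 ≤ a) {ν : ℝ} (hν₀ : 0 ≤ ν) (hν₁ : ν ≤ 1) :
    a ^ ν + (2 * min ν (1 - ν)) • ((1 / 2 : ℝ) • (1 + a) - a ^ (1 / 2 : ℝ)) ≤
      (1 - ν) • 1 + ν • a := by
  have hlhs : a ^ ν + (2 * min ν (1 - ν)) • ((1 / 2 : ℝ) • (1 + a) - a ^ (1 / 2 : ℝ)) =
      cfc (fun x : ℝ => x ^ ν + 2 * min ν (1 - ν) * (1 / 2 * (1 + x) - x ^ (1 / 2 : ℝ))) a := by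
    rw [cfc_add .., cfc_const_mul .., cfc_sub .., cfc_const_mul .., cfc_const_add .., cfc_id' ..,
      map_one, rpow_eq_cfc_real, rpow_eq_cfc_real]
  have hrhs : (1 - ν) • (1 : A) + ν • a = cfc (fun x : ℝ => (1 - ν) + ν * x) a := by
    rw [cfc_const_add .., cfc_const_mul .., cfc_id' .., Algebra.algebraMap_eq_smul_one]
  rw [hlhs, hrhs]
  refine cfc_mono fun x hx => ?_
  have := Real.refined_young_inequality hν₀ hν₁ (spectrum_nonneg_of_nonneg ha hx)
  linarith

theorem sqrt_ringInverse_eq_rpow {a : A} (ha : IsStrictlyPositive a) :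
    sqrt a⁻¹ʳ = a ^ (-(1 : ℝ) / 2) := by
  rw [sqrt_ringInverse, sqrt_eq_rpow, inverse_rpow _ _ (by norm_num)]
  norm_num

end CFC

open CFC Ring

theorem geomMean_eq_conjSqrt {A : H →L[ℂ] H} (hA : IsStrictlyPositive A) (B : H →L[ℂ] H)
    (ν : ℝ) : geomMean A B ν = conjSqrt A (conjSqrt A⁻¹ʳ B ^ ν) := by
  rw [geomMean, conjSqrt_apply, conjSqrt_apply, sqrt_ringInverse_eq_rpow hA, sqrt_eq_rpow]

theorem refined_young_operator_general (A B : H →L[ℂ] H) (hA : 0 ≤ A) (hB : 0 ≤ B)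
    (hAu : IsUnit A) (ν : ℝ) (hν : ν ∈ Set.Icc (0:ℝ) 1)
    (r : ℝ) (hr : r = min ν (1 - ν)) :
    geomMean A B ν + (2 * r) • ((1/2 : ℝ) • (A + B) - geomMean A B (1/2)) ≤
      (1 - ν) • A + ν • B := by
  obtain ⟨hν₀, hν₁⟩ := hν
  subst hr
  have hA' : IsStrictlyPositive A := hAu.isStrictlyPositive hA
  rw [geomMean_eq_conjSqrt hA', geomMean_eq_conjSqrt hA']
  set T := conjSqrt A⁻¹ʳ B
  have hT : 0 ≤ T := by simpa using conjSqrt_le_conjSqrt (c := A⁻¹ʳ) hB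
  have hA1 : conjSqrt A 1 = A := conjSqrt_one A
  have hAT : conjSqrt A T = B := conjSqrt_conjSqrt_ringInverse A B
  calc _ = conjSqrt A
        (T ^ ν + (2 * min ν (1 - ν)) • ((1 / 2 : ℝ) • (1 + T) - T ^ (1 / 2 : ℝ))) := by
        simp only [map_add, map_smul, map_sub, hA1, hAT]
    _ ≤ conjSqrt A ((1 - ν) • 1 + ν • T) :=
        conjSqrt_le_conjSqrt (refined_young_inequality hT hν₀ hν₁)
    _ = _ := by simp only [map_add, map_smul, hA1, hAT]

theorem refined_young_operator (A B : H →L[ℂ] H) (hA : 0 ≤ A) (hB : 0 ≤ B)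
    (hAu : IsUnit A) (hBu : IsUnit B) (ν : ℝ) (hν : ν ∈ Set.Icc (0:ℝ) 1)
    (r : ℝ) (hr : r = min ν (1 - ν)) :
    geomMean A B ν + (2 * r) • ((1/2 : ℝ) • (A + B) - geomMean A B (1/2)) ≤
      (1 - ν) • A + ν • B :=
  refined_young_operator_general A B hA hB hAu ν hν r hr
end

section
/- For positive invertible operators A, B and ν ∈ [0,1] with r = min{ν, 1−ν}, the weighted geometric mean dominates the refined harmonic-side expression: A♯_ν B ≥ { A⁻¹♯_ν B⁻¹ + 2r((A⁻¹+B⁻¹)/2 − A⁻¹♯_{1/2}B⁻¹) }⁻¹ in the Loewner order. -/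
/-!
The correction term is positive semidefinite by the operator AM–GM inequality `X ♯_{1/2} Y ≤ (X + Y) / 2`
(conjugate `2 T^{1/2} ≤ 1 + T` by `X^{1/2}`), so the bracket dominates `A⁻¹ ♯_ν B⁻¹`.
Inversion is antitone on strictly positive operators, and `(A⁻¹ ♯_ν B⁻¹)⁻¹ = A ♯_ν B`.
-/

variable {H : Type*} [NormedAddCommGroup H] [InnerProductSpace ℂ H] [CompleteSpace H]

open Ring CFC

section CStarAlgebra

variable {A : Type*} [CStarAlgebra A] [PartialOrder A] [StarOrderedRing A]

lemma CFC.rpow_ringInverse {a : A} (x : ℝ) (ha : IsStrictlyPositive a) :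
    a⁻¹ʳ ^ x = (a ^ x)⁻¹ʳ := by
  rcases eq_or_ne x 0 with rfl | hx
  · rw [rpow_zero _ ha.ringInverse.nonneg, rpow_zero _ ha.nonneg, inverse_one]
  · rw [inverse_rpow a x hx, inverse_eq_rpow_neg_one, rpow_rpow _ _ _ (by norm_num)]
    simp

lemma CFC.two_smul_rpow_half_le_one_add {a : A} (ha : 0 ≤ a) :
    (2 : ℝ) • a ^ (1 / 2 : ℝ) ≤ 1 + a := by
  rw [← sqrt_eq_rpow, ← sub_nonneg]
  have hs : IsSelfAdjoint (sqrt a) := by cfc_tac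
  have hsq : 1 + a - (2 : ℝ) • sqrt a = star (1 - sqrt a) * (1 - sqrt a) := by
    rw [star_sub, star_one, hs.star_eq]
    nth_rw 1 [← sqrt_mul_sqrt_self a]
    simp only [sub_mul, mul_sub, one_mul, mul_one, two_smul]
    abel
  rw [hsq]
  exact star_mul_self_nonneg _

end CStarAlgebra

variable {X Y : H →L[ℂ] H}

lemma IsStrictlyPositive.geomMean (hX : IsStrictlyPositive X) (hY : IsStrictlyPositive Y)
    (ν : ℝ) : IsStrictlyPositive (geomMean X Y ν) := by
  unfold _root_.geomMean
  cfc_tac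

lemma geomMean_ringInverse (hX : IsStrictlyPositive X) (hY : IsStrictlyPositive Y) (ν : ℝ) :
    geomMean X⁻¹ʳ Y⁻¹ʳ ν = (geomMean X Y ν)⁻¹ʳ := by
  set C := X ^ ((1:ℝ)/2)
  set D := X ^ (-(1:ℝ)/2)
  have hC : IsUnit C := (IsStrictlyPositive.rpow X _ hX).isUnit
  have hD : IsUnit D := (IsStrictlyPositive.rpow X _ hX).isUnit
  have hT : IsStrictlyPositive (D * Y * D) := by cfc_tac
  rw [geomMean, geomMean, rpow_ringInverse _ hX, rpow_ringInverse _ hX,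
    inverse_mul (a := C * _) (.inr hC), inverse_mul (a := C) (.inl hC),
    ← rpow_ringInverse _ hT, inverse_mul (a := D * Y) (.inr hD), inverse_mul (a := D) (.inl hD)]
  simp only [C, D, mul_assoc]

lemma geomMean_half_le (hX : IsStrictlyPositive X) (hY : 0 ≤ Y) :
    geomMean X Y (1 / 2) ≤ (1 / 2 : ℝ) • (X + Y) := by
  set C := X ^ ((1:ℝ)/2)
  set D := X ^ (-(1:ℝ)/2)
  set T := D * Y * D
  have hCD : C * D = 1 := by simp only [C, D, neg_div]; exact rpow_mul_rpow_neg _ hX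
  have hDC : D * C = 1 := by simp only [C, D, neg_div]; exact rpow_neg_mul_rpow _ hX
  have hCC : C * C = X := by simp only [C]; rw [← sqrt_eq_rpow, sqrt_mul_sqrt_self X hX.nonneg]
  have hCTC : C * T * C = Y := by
    simp only [T, ← mul_assoc, hCD, one_mul]
    rw [mul_assoc, hDC, mul_one]
  have hamgm : (2 : ℝ) • geomMean X Y (1 / 2) ≤ X + Y :=
    calc (2 : ℝ) • geomMean X Y (1 / 2) = C * ((2 : ℝ) • T ^ (1 / 2 : ℝ)) * C := by
          rw [geomMean, mul_smul_comm, smul_mul_assoc]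
      _ ≤ C * (1 + T) * C :=
          IsSelfAdjoint.conjugate_le_conjugate
            (two_smul_rpow_half_le_one_add (conjugate_nonneg_of_nonneg hY rpow_nonneg))
            (IsSelfAdjoint.of_nonneg rpow_nonneg)
      _ = X + Y := by rw [mul_add, add_mul, mul_one, hCC, hCTC]
  calc geomMean X Y (1 / 2) = (1 / 2 : ℝ) • (2 : ℝ) • geomMean X Y (1 / 2) := by
        rw [smul_smul]; norm_num
    _ ≤ (1 / 2 : ℝ) • (X + Y) := smul_le_smul_of_nonneg_left hamgm (by norm_num)

theorem geomMean_ge_refined_harmonic (A B : H →L[ℂ] H) (hA : 0 ≤ A) (hB : 0 ≤ B)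
    (hAu : IsUnit A) (hBu : IsUnit B) (ν : ℝ) (hν : ν ∈ Set.Icc (0:ℝ) 1)
    (r : ℝ) (hr : r = min ν (1 - ν)) :
    Ring.inverse (geomMean (Ring.inverse A) (Ring.inverse B) ν +
        (2 * r) • ((1/2 : ℝ) • (Ring.inverse A + Ring.inverse B) -
          geomMean (Ring.inverse A) (Ring.inverse B) (1/2))) ≤
      geomMean A B ν := by
  have hAp : IsStrictlyPositive A := hAu.isStrictlyPositive hA
  have hBp : IsStrictlyPositive B := hBu.isStrictlyPositive hB
  have hr0 : 0 ≤ 2 * r := by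
    rw [hr]; linarith [le_min hν.1 (sub_nonneg.2 hν.2)]
  have hgap : 0 ≤ (1/2 : ℝ) • (A⁻¹ʳ + B⁻¹ʳ) - geomMean A⁻¹ʳ B⁻¹ʳ (1/2) :=
    sub_nonneg.2 (geomMean_half_le hAp.ringInverse hBp.ringInverse.nonneg)
  calc _ ≤ (geomMean A⁻¹ʳ B⁻¹ʳ ν)⁻¹ʳ :=
        CStarAlgebra.ringInverse_le_ringInverse (le_add_of_nonneg_right (smul_nonneg hr0 hgap))
          (hAp.ringInverse.geomMean hBp.ringInverse ν)
    _ = geomMean A B ν := by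
        rw [geomMean_ringInverse hAp hBp, inverse_inverse (hAp.geomMean hBp ν).isUnit]
end

section
/- For positive invertible operators A, B and ν ∈ [0,1] with r = min{ν, 1−ν}, { A⁻¹♯_ν B⁻¹ + 2r((A⁻¹+B⁻¹)/2 − A⁻¹♯_{1/2}B⁻¹) }⁻¹ ≥ { (1−ν)A⁻¹ + νB⁻¹ }⁻¹ in the Loewner order, refining the geometric-harmonic mean inequality. -/
/-!
With `P = A⁻¹`, `Q = B⁻¹` and `C = P^{-1/2} Q P^{-1/2}`, the operators `P`, `Q` and `P ♯_μ Q` are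
the conjugates by `P^{1/2}` of `1`, `C` and `C^μ`. The refined Young inequality
`x^ν + 2r((1 + x)/2 - √x) ≤ (1 - ν) + νx` for `x ≥ 0` (a chord bound for the convex map `t ↦ x^t`
on `[0, 1/2]` or `[1/2, 1]`) lifts to `C` by the functional calculus, and conjugation preserves
the order. Hence the refined geometric mean lies below `(1 - ν)P + νQ`; it is strictly positive,
and inversion reverses the order between strictly positive operators.
-/

variable {H : Type*} [NormedAddCommGroup H] [InnerProductSpace ℂ H] [CompleteSpace H]

namespace Real

lemma rpow_sub_mul_add_mul_le {x a b t : ℝ} (hx : 0 ≤ x) (ha : 0 ≤ a) (hb : 0 ≤ b)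
    (ht₀ : 0 ≤ t) (ht₁ : t ≤ 1) :
    x ^ ((1 - t) * a + t * b) ≤ (1 - t) * x ^ a + t * x ^ b :=
  calc x ^ ((1 - t) * a + t * b) = (x ^ a) ^ (1 - t) * (x ^ b) ^ t := by
        rw [rpow_add_of_nonneg hx (by nlinarith) (by positivity), ← rpow_mul hx,
          ← rpow_mul hx, mul_comm a, mul_comm b]
    _ ≤ _ := geom_mean_le_arith_mean2_weighted (by linarith) ht₀ (by positivity)
        (by positivity) (by ring)

lemma refined_young {x ν : ℝ} (hx : 0 ≤ x) (hν₀ : 0 ≤ ν) (hν₁ : ν ≤ 1) :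
    x ^ ν + 2 * min ν (1 - ν) * (1 / 2 * (1 + x) - x ^ (1 / 2 : ℝ)) ≤ 1 - ν + ν * x := by
  rcases le_total ν (1 - ν) with h | h
  · have chord := rpow_sub_mul_add_mul_le (t := 2 * ν) hx le_rfl one_half_pos.le
      (by linarith) (by linarith)
    rw [show (1 - 2 * ν) * 0 + 2 * ν * (1 / 2) = ν by ring, rpow_zero] at chord
    rw [min_eq_left h]
    linarith
  · have chord := rpow_sub_mul_add_mul_le (t := 2 * ν - 1) hx one_half_pos.le zero_le_one
      (by linarith) (by linarith)
    rw [show (1 - (2 * ν - 1)) * (1 / 2) + (2 * ν - 1) * 1 = ν by ring, rpow_one] at chord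
    rw [min_eq_right h]
    linarith

end Real

namespace CFC

variable {𝒜 : Type*} [CStarAlgebra 𝒜] [PartialOrder 𝒜] [StarOrderedRing 𝒜]

lemma rpow_one_half_le_smul_one_add (C : 𝒜) (hC : 0 ≤ C) :
    C ^ (1 / 2 : ℝ) ≤ (1 / 2 : ℝ) • (1 + C) := by
  have hs : IsSelfAdjoint (1 - sqrt C) := (IsSelfAdjoint.one 𝒜).sub (.of_nonneg (sqrt_nonneg C))
  have key : (1 / 2 : ℝ) • (1 + C) - C ^ (1 / 2 : ℝ) =
      (1 / 2 : ℝ) • (star (1 - sqrt C) * (1 - sqrt C)) := by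
    rw [hs.star_eq, ← sqrt_eq_rpow]
    simp only [mul_sub, sub_mul, one_mul, mul_one, sqrt_mul_sqrt_self C]
    module
  rw [← sub_nonneg, key]
  exact smul_nonneg (by norm_num) (star_mul_self_nonneg _)

lemma refined_young (C : 𝒜) (hC : 0 ≤ C) {ν : ℝ} (hν₀ : 0 ≤ ν) (hν₁ : ν ≤ 1) :
    C ^ ν + (2 * min ν (1 - ν)) • ((1 / 2 : ℝ) • (1 + C) - C ^ (1 / 2 : ℝ)) ≤
      (1 - ν) • (1 : 𝒜) + ν • C := by
  have hC' : IsSelfAdjoint C := .of_nonneg hC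
  have lhs : C ^ ν + (2 * min ν (1 - ν)) • ((1 / 2 : ℝ) • (1 + C) - C ^ (1 / 2 : ℝ)) =
      cfc (fun x : ℝ => x ^ ν + 2 * min ν (1 - ν) * (1 / 2 * (1 + x) - x ^ (1 / 2 : ℝ))) C := by
    rw [rpow_eq_cfc_real, rpow_eq_cfc_real, cfc_add .., cfc_const_mul .., cfc_sub ..,
      cfc_const_mul .., cfc_add .., cfc_const_one ℝ C, cfc_id' ℝ C]
  have rhs : (1 - ν) • (1 : 𝒜) + ν • C = cfc (fun x : ℝ => 1 - ν + ν * x) C := by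
    rw [cfc_add .., cfc_const (1 - ν) C, cfc_const_mul .., cfc_id' ℝ C,
      Algebra.algebraMap_eq_smul_one]
  rw [lhs, rhs]
  exact cfc_mono fun x hx => Real.refined_young (spectrum_nonneg_of_nonneg hC hx) hν₀ hν₁

lemma conjSqrt_conj_rpow_neg_one_half (P Q : 𝒜) (hP : IsStrictlyPositive P) :
    conjSqrt P (P ^ (-(1 : ℝ) / 2) * Q * P ^ (-(1 : ℝ) / 2)) = Q := by
  have h₁ : P ^ (1 / 2 : ℝ) * P ^ (-(1 : ℝ) / 2) = 1 := by
    rw [neg_div]; exact rpow_mul_rpow_neg _ hP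
  have h₂ : P ^ (-(1 : ℝ) / 2) * P ^ (1 / 2 : ℝ) = 1 := by
    rw [neg_div]; exact rpow_neg_mul_rpow _ hP
  rw [conjSqrt_apply, sqrt_eq_rpow]
  calc P ^ (1 / 2 : ℝ) * (P ^ (-(1 : ℝ) / 2) * Q * P ^ (-(1 : ℝ) / 2)) * P ^ (1 / 2 : ℝ)
      = (P ^ (1 / 2 : ℝ) * P ^ (-(1 : ℝ) / 2)) * Q * (P ^ (-(1 : ℝ) / 2) * P ^ (1 / 2 : ℝ)) := by
        simp only [mul_assoc]
    _ = Q := by rw [h₁, h₂, one_mul, mul_one]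

end CFC

open CFC

lemma geomMean_eq_conjSqrt_s5 (P Q : H →L[ℂ] H) (μ : ℝ) :
    geomMean P Q μ = conjSqrt P ((P ^ (-(1 : ℝ) / 2) * Q * P ^ (-(1 : ℝ) / 2)) ^ μ) := by
  rw [geomMean, conjSqrt_apply, sqrt_eq_rpow]

lemma geomMean_add_smul_eq_conjSqrt {P : H →L[ℂ] H} (hP : IsStrictlyPositive P) (Q : H →L[ℂ] H)
    (ν t : ℝ) :
    geomMean P Q ν + t • ((1 / 2 : ℝ) • (P + Q) - geomMean P Q (1 / 2)) =
      conjSqrt P ((P ^ (-(1 : ℝ) / 2) * Q * P ^ (-(1 : ℝ) / 2)) ^ ν +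
        t • ((1 / 2 : ℝ) • (1 + P ^ (-(1 : ℝ) / 2) * Q * P ^ (-(1 : ℝ) / 2)) -
          (P ^ (-(1 : ℝ) / 2) * Q * P ^ (-(1 : ℝ) / 2)) ^ (1 / 2 : ℝ))) := by
  simp only [map_add, map_sub, map_smul, conjSqrt_one P, conjSqrt_conj_rpow_neg_one_half P Q hP,
    ← geomMean_eq_conjSqrt_s5]

theorem geomMean_add_smul_le {P Q : H →L[ℂ] H} (hP : IsStrictlyPositive P) (hQ : 0 ≤ Q) {ν : ℝ}
    (hν₀ : 0 ≤ ν) (hν₁ : ν ≤ 1) :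
    geomMean P Q ν + (2 * min ν (1 - ν)) • ((1 / 2 : ℝ) • (P + Q) - geomMean P Q (1 / 2)) ≤
      (1 - ν) • P + ν • Q := by
  have hC : 0 ≤ P ^ (-(1 : ℝ) / 2) * Q * P ^ (-(1 : ℝ) / 2) :=
    conjugate_nonneg_of_nonneg hQ rpow_nonneg
  have key := conjSqrt_le_conjSqrt (c := P) (refined_young _ hC hν₀ hν₁)
  rwa [← geomMean_add_smul_eq_conjSqrt hP, map_add, map_smul, map_smul, conjSqrt_one P,
    conjSqrt_conj_rpow_neg_one_half P Q hP] at key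

theorem isStrictlyPositive_geomMean_add_smul {P Q : H →L[ℂ] H} (hP : IsStrictlyPositive P)
    (hQ : IsStrictlyPositive Q) (ν : ℝ) {t : ℝ} (ht : 0 ≤ t) :
    IsStrictlyPositive (geomMean P Q ν + t • ((1 / 2 : ℝ) • (P + Q) - geomMean P Q (1 / 2))) := by
  have hC : IsStrictlyPositive (P ^ (-(1 : ℝ) / 2) * Q * P ^ (-(1 : ℝ) / 2)) := by
    have hu : IsStrictlyPositive (P ^ (-(1 : ℝ) / 2)) := hP.rpow _ _
    exact IsStrictlyPositive.conjugate_of_isUnit_of_isSelfAdjoint Q _ hu.isUnit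
      (.of_nonneg hu.nonneg) hQ
  rw [geomMean_add_smul_eq_conjSqrt hP, isStrictlyPositive_conjSqrt_iff P _ hP]
  exact (hC.rpow _ ν).add_nonneg
    (smul_nonneg ht (sub_nonneg.2 (rpow_one_half_le_smul_one_add _ hC.nonneg)))

theorem refined_harmonic_ge_harmonic (A B : H →L[ℂ] H) (hA : 0 ≤ A) (hB : 0 ≤ B)
    (hAu : IsUnit A) (hBu : IsUnit B) (ν : ℝ) (hν : ν ∈ Set.Icc (0:ℝ) 1)
    (r : ℝ) (hr : r = min ν (1 - ν)) :
    Ring.inverse ((1 - ν) • Ring.inverse A + ν • Ring.inverse B) ≤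
      Ring.inverse (geomMean (Ring.inverse A) (Ring.inverse B) ν +
        (2 * r) • ((1/2 : ℝ) • (Ring.inverse A + Ring.inverse B) -
          geomMean (Ring.inverse A) (Ring.inverse B) (1/2))) := by
  obtain ⟨hν₀, hν₁⟩ := hν
  have hA' := (hAu.isStrictlyPositive hA).ringInverse
  have hB' := (hBu.isStrictlyPositive hB).ringInverse
  have hr₀ : 0 ≤ 2 * r := by rw [hr]; exact mul_nonneg zero_le_two (le_min hν₀ (by linarith))
  exact CStarAlgebra.ringInverse_le_ringInverse (hr ▸ geomMean_add_smul_le hA' hB'.nonneg hν₀ hν₁)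
    (isStrictlyPositive_geomMean_add_smul hA' hB' ν hr₀)
end

section
/- For ν ∈ [0,1], a positive operator A, and a unit vector x with ⟨x, A x⟩ ≠ 0, setting r = min{ν, 1−ν}, we have 1 − ⟨x, A x⟩^{−ν} ⟨x, A^ν x⟩ ≥ r (1 − ⟨x, A x⟩^{−1/2} ⟨x, A^{1/2} x⟩)². This refines the Hölder–McCarthy inequality ⟨x, A x⟩^ν ≥ ⟨x, A^ν x⟩. -/
open scoped InnerProductSpace ComplexOrder

/-! Young's inequality with Kittaneh–Manasrah's refinement, `u ^ ν + r (√u - 1)² ≤ ν u + (1 - ν)`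
for `u ≥ 0`, lifts by monotonicity of the continuous functional calculus to the operator inequality
`A ^ ν + r (A ^ (1/2) - 1)² ≤ ν A + (1 - ν)`. Normalise `A` so that `⟪x, A x⟫ = 1`; pairing with `x`
and the Cauchy–Schwarz bound `⟪x, (A ^ (1/2) - 1) x⟫² ≤ ⟪x, (A ^ (1/2) - 1)² x⟫` then give the
claim, and undoing the normalisation produces the factors `⟪x, A x⟫ ^ (-ν)` and `⟪x, A x⟫ ^ (-1/2)`. -/

namespace Real

theorem rpow_add_min_mul_sq_le {ν u : ℝ} (h0 : 0 ≤ ν) (h1 : ν ≤ 1) (hu : 0 ≤ u) :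
    u ^ ν + min ν (1 - ν) * (√u - 1) ^ 2 ≤ ν * u + (1 - ν) := by
  have hpow (p : ℝ) : √u ^ (2 * p) = u ^ p := by
    rw [sqrt_eq_rpow, ← rpow_mul hu]; ring_nf
  rcases le_total ν (1 - ν) with h | h
  · have amgm := geom_mean_le_arith_mean2_weighted (w₁ := 2 * ν) (w₂ := 1 - 2 * ν)
      (by linarith) (by linarith) (sqrt_nonneg u) zero_le_one (by ring)
    rw [hpow, one_rpow, mul_one] at amgm
    rw [min_eq_left h]
    nlinarith [sq_sqrt hu]
  · have amgm := geom_mean_le_arith_mean2_weighted (w₁ := 2 * ν - 1) (w₂ := 2 * (1 - ν))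
      (by linarith) (by linarith) hu (sqrt_nonneg u) (by ring)
    rw [hpow, ← rpow_add' hu (by linarith), show 2 * ν - 1 + (1 - ν) = ν by ring] at amgm
    rw [min_eq_right h]
    nlinarith [sq_sqrt hu]

end Real

namespace CFC

variable {𝒜 : Type*} [CStarAlgebra 𝒜] [PartialOrder 𝒜] [StarOrderedRing 𝒜] {a : 𝒜}

theorem rpow_add_min_smul_sq_le (ha : 0 ≤ a) {ν : ℝ} (h0 : 0 ≤ ν) (h1 : ν ≤ 1) :
    a ^ ν + min ν (1 - ν) • (a ^ (1 / 2 : ℝ) - 1) ^ 2 ≤ ν • a + (1 - ν) • 1 := by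
  have hrpow (p : ℝ) : a ^ p = cfc (fun t : ℝ => t ^ p) a := rpow_eq_cfc_real ha
  have hsqrt : a ^ (1 / 2 : ℝ) = cfc Real.sqrt a := by
    rw [hrpow]; exact cfc_congr fun t _ => (Real.sqrt_eq_rpow t).symm
  have hlhs : a ^ ν + min ν (1 - ν) • (a ^ (1 / 2 : ℝ) - 1) ^ 2 =
      cfc (fun t : ℝ => t ^ ν + min ν (1 - ν) * (√t - 1) ^ 2) a := by
    rw [cfc_add .., cfc_const_mul .., cfc_pow .., cfc_sub .., cfc_const_one .., ← hsqrt, ← hrpow]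
  have hrhs : ν • a + (1 - ν) • (1 : 𝒜) = cfc (fun t : ℝ => ν * t + (1 - ν)) a := by
    rw [cfc_add_const .., cfc_const_mul_id .., Algebra.algebraMap_eq_smul_one]
  rw [hlhs, hrhs]
  exact cfc_mono fun t ht => Real.rpow_add_min_mul_sq_le h0 h1 (spectrum_nonneg_of_nonneg ha ht)

theorem smul_rpow (ha : 0 ≤ a) {c : ℝ} (hc : 0 ≤ c) {y : ℝ} (hy : 0 ≤ y) :
    (c • a) ^ y = c ^ y • a ^ y := by
  rw [rpow_eq_cfc_real ha, rpow_eq_cfc_real (smul_nonneg hc ha),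
    ← cfc_comp_smul c (fun t : ℝ => t ^ y) a (Real.continuous_rpow_const hy).continuousOn,
    ← cfc_const_mul ..]
  exact cfc_congr fun t ht => Real.mul_rpow hc (spectrum_nonneg_of_nonneg ha ht)

end CFC

open ContinuousLinearMap RCLike

section

variable {H : Type*} [NormedAddCommGroup H] [InnerProductSpace ℂ H]

theorem re_inner_mono {S T : H →L[ℂ] H} (h : S ≤ T) (x : H) : re ⟪x, S x⟫_ℂ ≤ re ⟪x, T x⟫_ℂ := by
  simpa [inner_sub_right] using h.re_inner_nonneg_right x

theorem sq_re_inner_le [CompleteSpace H] {T : H →L[ℂ] H} (hT : IsSelfAdjoint T) (x : H) :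
    re ⟪x, T x⟫_ℂ ^ 2 ≤ ‖x‖ ^ 2 * re ⟪x, (T ^ 2) x⟫_ℂ := by
  have hsq : ⟪x, (T ^ 2) x⟫_ℂ = ⟪T x, T x⟫_ℂ := (hT.isSymmetric x (T x)).symm
  calc re ⟪x, T x⟫_ℂ ^ 2 = |re ⟪x, T x⟫_ℂ| ^ 2 := (sq_abs _).symm
    _ ≤ (‖x‖ * ‖T x‖) ^ 2 := by
      gcongr; exact (abs_re_le_norm _).trans (norm_inner_le_norm _ _)
    _ = _ := by rw [mul_pow, hsq, inner_self_eq_norm_sq]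

theorem min_mul_sq_le_one_sub_re_inner_rpow [CompleteSpace H] {A : H →L[ℂ] H} (hA : 0 ≤ A)
    {x : H} (hx : ‖x‖ = 1) (hAx : re ⟪x, A x⟫_ℂ = 1) {ν : ℝ} (h0 : 0 ≤ ν) (h1 : ν ≤ 1) :
    min ν (1 - ν) * (1 - re ⟪x, (A ^ (1 / 2 : ℝ)) x⟫_ℂ) ^ 2 ≤ 1 - re ⟪x, (A ^ ν) x⟫_ℂ := by
  have hxx : re ⟪x, x⟫_ℂ = 1 := by rw [inner_self_eq_norm_sq, hx, one_pow]
  have hop := re_inner_mono (CFC.rpow_add_min_smul_sq_le hA h0 h1) x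
  have hCS := sq_re_inner_le (T := A ^ (1 / 2 : ℝ) - 1)
    ((IsSelfAdjoint.of_nonneg CFC.rpow_nonneg).sub (.one _)) x
  simp only [add_apply, sub_apply, smul_apply, one_apply_eq_self, inner_add_right, inner_sub_right,
    inner_smul_right_eq_smul, map_add, map_sub, smul_re, hxx, hAx, hx] at hop hCS
  have hr : 0 ≤ min ν (1 - ν) := le_min h0 (by linarith)
  nlinarith [mul_le_mul_of_nonneg_left hCS hr]

end

theorem refined_holder_mccarthy {H : Type*} [NormedAddCommGroup H] [InnerProductSpace ℂ H]
    [CompleteSpace H] (A : H →L[ℂ] H) (hA : 0 ≤ A) (x : H) (hx : ‖x‖ = 1)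
    (ν : ℝ) (hν : ν ∈ Set.Icc (0:ℝ) 1) (r : ℝ) (hr : r = min ν (1 - ν))
    (hAx : ⟪x, A x⟫_ℂ ≠ 0) :
    r * (1 - (⟪x, A x⟫_ℂ).re ^ (-(1:ℝ)/2) * (⟪x, (A ^ ((1:ℝ)/2)) x⟫_ℂ).re) ^ 2 ≤
      1 - (⟪x, A x⟫_ℂ).re ^ (-ν) * (⟪x, (A ^ ν) x⟫_ℂ).re := by
  obtain ⟨h0, h1⟩ := hν
  set a := (⟪x, A x⟫_ℂ).re
  have ha : 0 < a :=
    (Complex.pos_iff.mp (((nonneg_iff_isPositive A).mp hA).inner_nonneg_right x |>.lt_of_ne' hAx)).1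
  have hinv_rpow (p : ℝ) : a⁻¹ ^ p = a ^ (-p) := by rw [Real.inv_rpow ha.le, Real.rpow_neg ha.le]
  have hnormalized : re ⟪x, (a⁻¹ • A) x⟫_ℂ = 1 := by
    rw [smul_apply, inner_smul_right_eq_smul, smul_re]
    exact inv_mul_cancel₀ ha.ne'
  have key := min_mul_sq_le_one_sub_re_inner_rpow (smul_nonneg (inv_nonneg.2 ha.le) hA) hx
    hnormalized h0 h1
  rw [CFC.smul_rpow hA (inv_nonneg.2 ha.le) h0,
    CFC.smul_rpow hA (inv_nonneg.2 ha.le) (by norm_num)] at key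
  simp only [smul_apply, inner_smul_right_eq_smul, smul_re, hinv_rpow] at key
  rwa [hr, neg_div]
end

section
/- For b > 0 and ν ∈ [0,1/2], the quantity ν_b := 1/log b − 1/(2(√b − 1)) (for b ≠ 1) lies in [0, 1/2]. -/
theorem nu_b_mem_Icc (b : ℝ) (hb : 0 < b) (hb1 : b ≠ 1) :
    1 / Real.log b - 1 / (2 * (Real.sqrt b - 1)) ∈ Set.Icc (0:ℝ) (1/2) := by
  set t := Real.sqrt b with htdef
  have ht : 0 < t := Real.sqrt_pos.mpr hb
  have ht1 : t ≠ 1 := by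
    intro h
    apply hb1
    have := Real.sq_sqrt hb.le
    rw [← htdef, h] at this
    simpa using this.symm
  set L := Real.log t with hLdef
  have hlogb : Real.log b = 2 * L := by
    rw [hLdef, htdef, Real.log_sqrt hb.le]; ring
  have hA : L < t - 1 := Real.log_lt_sub_one_of_pos ht ht1
  have hB : t - 1 < t * L := by
    have h1 : Real.log t⁻¹ < t⁻¹ - 1 :=
      Real.log_lt_sub_one_of_pos (by positivity) (by simpa using inv_eq_one.ne.mpr ht1)
    rw [Real.log_inv] at h1
    have := mul_lt_mul_of_pos_left h1 ht
    rw [mul_sub, mul_inv_cancel₀ ht.ne'] at this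
    nlinarith
  have hD : 0 < L * (t - 1) := by nlinarith
  have hN : 0 < t - 1 - L := by linarith
  have hND : t - 1 - L ≤ L * (t - 1) := by nlinarith
  have hLne : L ≠ 0 := by
    intro h; rw [h] at hD; simp at hD
  have htne : t - 1 ≠ 0 := by
    intro h; rw [h] at hD; simp at hD
  have hEq : 1 / Real.log b - 1 / (2 * (t - 1)) = (t - 1 - L) / (2 * (L * (t - 1))) := by
    rw [hlogb]; field_simp
  rw [hEq]
  constructor
  · positivity
  · rw [div_le_iff₀ (by positivity)]
    nlinarith
end

section
/- For b > 0 and all ν ∈ [0, 1/2], we have S(√b) · b^ν ≥ ν b + (1−ν) − ν(√b − 1)², where S(h) = h^{1/(h−1)} / (e · log(h^{1/(h−1)})) for h ≠ 1 and S(1) = 1 is Specht's ratio. -/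
/-!
Writing `L = log h`, Specht's ratio is `S(h) = (h - 1) / L · exp (L / (h - 1) - 1)` with
`(h - 1) / L > 0`. Hence `S(h) h^p = (h - 1) / L · exp (x - 1)` for `x = p L + L / (h - 1)`, and
`exp (x - 1) ≥ x` gives `S(h) h^p ≥ (h - 1) / L · x = p (h - 1) + 1` for every real `p`.
Take `h = √b`, `p = 2ν`, and note `2ν (√b - 1) + 1 = ν b + (1 - ν) - ν (√b - 1)²`.
-/

/-- Specht's ratio `S(h) = h^{1/(h-1)} / (e log h^{1/(h-1)})` for `h ≠ 1`, with `S(1) = 1`. -/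
noncomputable def specht (h : ℝ) : ℝ :=
  if h = 1 then 1
  else h ^ ((1:ℝ)/(h-1)) / (Real.exp 1 * Real.log (h ^ ((1:ℝ)/(h-1))))

open Real

lemma sub_one_div_log_pos {h : ℝ} (hh : 0 < h) (h1 : h ≠ 1) : 0 < (h - 1) / log h := by
  rcases h1.lt_or_gt with hlt | hgt
  · exact div_pos_of_neg_of_neg (by linarith) (log_neg hh hlt)
  · exact div_pos (by linarith) (log_pos hgt)

lemma specht_mul_rpow_eq {h : ℝ} (hh : 0 < h) (h1 : h ≠ 1) (p : ℝ) :
    specht h * h ^ p = (h - 1) / log h * exp (p * log h + log h / (h - 1) - 1) := by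
  have hL : log h ≠ 0 := log_ne_zero_of_pos_of_ne_one hh h1
  have hh1 : h - 1 ≠ 0 := sub_ne_zero.mpr h1
  rw [specht, if_neg h1, rpow_def_of_pos hh, rpow_def_of_pos hh, log_exp, exp_sub, exp_add]
  field_simp

theorem mul_sub_one_add_one_le_specht_mul_rpow {h : ℝ} (hh : 0 < h) (p : ℝ) :
    p * (h - 1) + 1 ≤ specht h * h ^ p := by
  rcases eq_or_ne h 1 with rfl | h1
  · simp [specht]
  have hL : log h ≠ 0 := log_ne_zero_of_pos_of_ne_one hh h1
  have hh1 : h - 1 ≠ 0 := sub_ne_zero.mpr h1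
  set x := p * log h + log h / (h - 1)
  calc p * (h - 1) + 1 = (h - 1) / log h * x := by simp only [x]; field_simp
    _ ≤ (h - 1) / log h * exp (x - 1) := by
        gcongr
        · exact (sub_one_div_log_pos hh h1).le
        · linarith [add_one_le_exp (x - 1)]
    _ = specht h * h ^ p := (specht_mul_rpow_eq hh h1 p).symm

theorem specht_mul_rpow_ge_general (b : ℝ) (hb : 0 < b) (ν : ℝ) :
    ν * b + (1 - ν) - ν * (Real.sqrt b - 1) ^ 2 ≤ specht (Real.sqrt b) * b ^ ν := by
  have hs : 0 < √b := sqrt_pos.mpr hb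
  have hsq : √b ^ 2 = b := sq_sqrt hb.le
  have hpow : √b ^ (2 * ν) = b ^ ν := by rw [rpow_mul hs.le, rpow_two, hsq]
  have key := mul_sub_one_add_one_le_specht_mul_rpow hs (2 * ν)
  rw [hpow] at key
  linear_combination key - ν * hsq

theorem specht_mul_rpow_ge (b : ℝ) (hb : 0 < b) (ν : ℝ) (hν : ν ∈ Set.Icc (0:ℝ) (1/2)) :
    ν * b + (1 - ν) - ν * (Real.sqrt b - 1) ^ 2 ≤ specht (Real.sqrt b) * b ^ ν :=
  specht_mul_rpow_ge_general b hb ν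
end

section
/- For positive real numbers a, b and ν ∈ [0,1] with r = min{ν, 1−ν}, we have S(√(a/b)) a^{1−ν} b^ν ≥ (1−ν)a + νb − r(√a − √b)², where S is Specht's ratio. -/
/-!
Writing `u = log h / (h - 1) > 0`, Specht's ratio is `S(h) = e^u / (e u)`, and the line through
`(0, h)` and `(1, 1)` is tangent to the convex function `t ↦ S(h) h^{1-t}` (tangent inequality for
`exp` at `1 - u`). Hence `(1 - t) x + t y ≤ S(x/y) x^{1-t} y^t` for every real `t`.
Since `(1-ν)a + νb - ν(√a - √b)² = (1-2ν)a + 2ν√(ab)`, the case `r = ν` is this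
inequality for the pair `(a, √(ab))` with `t = 2ν`, and the case `r = 1 - ν` is the one for
`(√(ab), b)` with `t = 2ν - 1`; both pairs have ratio `√(a/b)`.
-/

open Real

lemma exp_mul_sub_add_one_le_exp (x₀ x : ℝ) : exp x₀ * (x - x₀ + 1) ≤ exp x :=
  calc exp x₀ * (x - x₀ + 1) ≤ exp x₀ * exp (x - x₀) := by
        gcongr
        exact add_one_le_exp _
    _ = exp x := by rw [← exp_add, add_sub_cancel]

lemma log_div_sub_one_pos {h : ℝ} (hh : 0 < h) (h1 : h ≠ 1) : 0 < log h / (h - 1) := by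
  rcases h1.lt_or_gt with hlt | hgt
  · exact div_pos_of_neg_of_neg (log_neg hh hlt) (by linarith)
  · exact div_pos (log_pos hgt) (by linarith)

lemma specht_eq_exp_div {h : ℝ} (hh : 0 < h) (h1 : h ≠ 1) :
    specht h = exp (log h / (h - 1)) / (exp 1 * (log h / (h - 1))) := by
  have hpow : h ^ (1 / (h - 1)) = exp (log h / (h - 1)) := by
    rw [rpow_def_of_pos hh, mul_one_div]
  rw [specht, if_neg h1, hpow, log_exp]

lemma one_sub_mul_add_le_specht_mul_rpow {h : ℝ} (hh : 0 < h) (t : ℝ) :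
    (1 - t) * h + t ≤ specht h * h ^ (1 - t) := by
  rcases eq_or_ne h 1 with rfl | h1
  · simp [specht]
  set u := log h / (h - 1) with hu
  have hlog : log h = (h - 1) * u := by
    rw [hu, mul_div_cancel₀ _ (sub_ne_zero.mpr h1)]
  have tangent := exp_mul_sub_add_one_le_exp (1 - u) ((1 - t) * log h)
  have hu_pos : 0 < u := log_div_sub_one_pos hh h1
  rw [specht_eq_exp_div hh h1, ← hu, rpow_def_of_pos hh, mul_comm (log h)]
  calc (1 - t) * h + t
        = exp u / (exp 1 * u) * (exp (1 - u) * ((1 - t) * log h - (1 - u) + 1)) := by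
          rw [hlog, exp_sub]
          field_simp
          ring
    _ ≤ exp u / (exp 1 * u) * exp ((1 - t) * log h) := by gcongr

lemma weighted_arith_le_specht_mul_geom {x y : ℝ} (hx : 0 < x) (hy : 0 < y) (t : ℝ) :
    (1 - t) * x + t * y ≤ specht (x / y) * (x ^ (1 - t) * y ^ t) := by
  have hgeom : x ^ (1 - t) * y ^ t = (x / y) ^ (1 - t) * y := by
    rw [div_rpow hx.le hy.le, rpow_sub hy, rpow_one]
    field_simp
  calc (1 - t) * x + t * y = ((1 - t) * (x / y) + t) * y := by field_simp
    _ ≤ specht (x / y) * (x / y) ^ (1 - t) * y := by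
        gcongr
        exact one_sub_mul_add_le_specht_mul_rpow (div_pos hx hy) t
    _ = specht (x / y) * (x ^ (1 - t) * y ^ t) := by rw [hgeom, mul_assoc]

lemma sqrt_rpow_two_mul {x : ℝ} (hx : 0 ≤ x) (s : ℝ) : √x ^ (2 * s) = x ^ s := by
  rw [sqrt_eq_rpow, ← rpow_mul hx]
  ring_nf

lemma sq_sqrt_sub_sqrt {a b : ℝ} (ha : 0 ≤ a) (hb : 0 ≤ b) :
    (√a - √b) ^ 2 = a + b - 2 * (√a * √b) := by
  rw [sub_sq, sq_sqrt ha, sq_sqrt hb]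
  ring

lemma sub_mul_sq_sqrt_sub_le_specht_mul_geom {a b : ℝ} (ha : 0 < a) (hb : 0 < b) (ν : ℝ) :
    (1 - ν) * a + ν * b - ν * (√a - √b) ^ 2 ≤ specht √(a / b) * (a ^ (1 - ν) * b ^ ν) := by
  have key :=
    weighted_arith_le_specht_mul_geom ha (mul_pos (sqrt_pos.2 ha) (sqrt_pos.2 hb)) (2 * ν)
  have hratio : a / (√a * √b) = √(a / b) := by
    rw [sqrt_div ha.le]
    field_simp
    rw [sq_sqrt ha.le]
  have hgeom : a ^ (1 - 2 * ν) * (√a * √b) ^ (2 * ν) = a ^ (1 - ν) * b ^ ν := by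
    rw [mul_rpow (sqrt_nonneg a) (sqrt_nonneg b), sqrt_rpow_two_mul ha.le,
      sqrt_rpow_two_mul hb.le, ← mul_assoc, ← rpow_add ha]
    ring_nf
  rw [hratio, hgeom] at key
  refine le_of_eq_of_le ?_ key
  rw [sq_sqrt_sub_sqrt ha.le hb.le]
  ring

lemma sub_one_sub_mul_sq_sqrt_sub_le_specht_mul_geom {a b : ℝ} (ha : 0 < a) (hb : 0 < b)
    (ν : ℝ) :
    (1 - ν) * a + ν * b - (1 - ν) * (√a - √b) ^ 2 ≤
      specht √(a / b) * (a ^ (1 - ν) * b ^ ν) := by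
  have key :=
    weighted_arith_le_specht_mul_geom (mul_pos (sqrt_pos.2 ha) (sqrt_pos.2 hb)) hb (2 * ν - 1)
  have hratio : √a * √b / b = √(a / b) := by
    rw [sqrt_div ha.le]
    field_simp
    rw [sq_sqrt hb.le]
  have hgeom : (√a * √b) ^ (1 - (2 * ν - 1)) * b ^ (2 * ν - 1) = a ^ (1 - ν) * b ^ ν := by
    rw [show 1 - (2 * ν - 1) = 2 * (1 - ν) by ring, mul_rpow (sqrt_nonneg a) (sqrt_nonneg b),
      sqrt_rpow_two_mul ha.le, sqrt_rpow_two_mul hb.le, mul_assoc, ← rpow_add hb]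
    ring_nf
  rw [hratio, hgeom] at key
  refine le_of_eq_of_le ?_ key
  rw [sq_sqrt_sub_sqrt ha.le hb.le]
  ring

theorem reverse_ratio_refined_young_general (a b : ℝ) (ha : 0 < a) (hb : 0 < b)
    (ν : ℝ) (r : ℝ) (hr : r = min ν (1 - ν)) :
    (1 - ν) * a + ν * b - r * (Real.sqrt a - Real.sqrt b) ^ 2 ≤
      specht (Real.sqrt (a / b)) * (a ^ (1 - ν) * b ^ ν) := by
  rcases min_choice ν (1 - ν) with h | h <;> rw [hr, h]
  · exact sub_mul_sq_sqrt_sub_le_specht_mul_geom ha hb ν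
  · exact sub_one_sub_mul_sq_sqrt_sub_le_specht_mul_geom ha hb ν

theorem reverse_ratio_refined_young (a b : ℝ) (ha : 0 < a) (hb : 0 < b)
    (ν : ℝ) (hν : ν ∈ Set.Icc (0:ℝ) 1) (r : ℝ) (hr : r = min ν (1 - ν)) :
    (1 - ν) * a + ν * b - r * (Real.sqrt a - Real.sqrt b) ^ 2 ≤
      specht (Real.sqrt (a / b)) * (a ^ (1 - ν) * b ^ ν) :=
  reverse_ratio_refined_young_general a b ha hb ν r hr
end

section
/- Specht's ratio S is monotone decreasing on (0,1) and monotone increasing on (1,∞), and S(1) = 1 with S(h) > 1 for h ≠ 1. -/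
noncomputable def sT (h : ℝ) : ℝ := Real.log h / (h - 1)
noncomputable def sF (t : ℝ) : ℝ := Real.exp (t - 1) / t

lemma sF_gt_one {t : ℝ} (ht : 0 < t) (ht1 : t ≠ 1) : 1 < sF t := by
  rw [sF, lt_div_iff₀ ht, one_mul]
  have := Real.add_one_lt_exp (x := t - 1) (by intro h; apply ht1; linarith)
  linarith

lemma sF_le {a b : ℝ} (ha : 0 < a) (hb : 0 < b) (h : a / b - 1 ≤ a - b) :
    sF b ≤ sF a := by
  rw [sF, sF, div_le_div_iff₀ hb ha]
  have h1 : a / b ≤ Real.exp (a - b) :=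
    le_trans (by have := Real.add_one_le_exp (a / b - 1); calc a/b = a/b - 1 + 1 := by ring
                 _ ≤ Real.exp (a/b - 1) := this) (Real.exp_le_exp.mpr h)
  calc Real.exp (b - 1) * a = Real.exp (b - 1) * b * (a / b) := by field_simp
    _ ≤ Real.exp (b - 1) * b * Real.exp (a - b) := by
        apply mul_le_mul_of_nonneg_left h1; positivity
    _ = Real.exp (a - 1) * b := by rw [mul_comm (Real.exp (b-1)) b, mul_assoc,
          ← Real.exp_add, show b - 1 + (a - b) = a - 1 by ring]; ring

lemma sT_deriv {h : ℝ} (h0 : 0 < h) (h1 : h ≠ 1) :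
    HasDerivAt sT ((h⁻¹ * (h - 1) - Real.log h * 1) / (h - 1) ^ 2) h := by
  exact (Real.hasDerivAt_log h0.ne').div ((hasDerivAt_id h).sub_const 1)
    (sub_ne_zero.mpr h1)

lemma one_sub_inv_lt_log {h : ℝ} (h0 : 0 < h) (h1 : h ≠ 1) : 1 - h⁻¹ < Real.log h := by
  have := Real.log_lt_sub_one_of_pos (inv_pos.mpr h0) (by
    simp [inv_eq_one]; exact h1)
  rw [Real.log_inv] at this
  linarith

lemma sT_deriv_neg {h : ℝ} (h0 : 0 < h) (h1 : h ≠ 1) : deriv sT h < 0 := by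
  rw [(sT_deriv h0 h1).deriv]
  apply div_neg_of_neg_of_pos
  · have : h⁻¹ * (h - 1) = 1 - h⁻¹ := by field_simp
    rw [this, mul_one]
    linarith [one_sub_inv_lt_log h0 h1]
  · exact pow_two_pos_of_ne_zero (sub_ne_zero.mpr h1)

lemma sT_anti_Ioi : StrictAntiOn sT (Set.Ioi (1:ℝ)) := by
  apply strictAntiOn_of_deriv_neg (convex_Ioi 1)
  · intro x hx
    exact ((sT_deriv (by linarith [Set.mem_Ioi.mp hx]) (ne_of_gt hx)).continuousAt).continuousWithinAt
  · intro x hx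
    rw [interior_Ioi] at hx
    exact sT_deriv_neg (by linarith [Set.mem_Ioi.mp hx]) (ne_of_gt hx)

lemma sT_anti_Ioo : StrictAntiOn sT (Set.Ioo (0:ℝ) 1) := by
  apply strictAntiOn_of_deriv_neg (convex_Ioo 0 1)
  · intro x hx
    exact ((sT_deriv hx.1 (ne_of_lt hx.2)).continuousAt).continuousWithinAt
  · intro x hx
    rw [interior_Ioo] at hx
    exact sT_deriv_neg hx.1 (ne_of_lt hx.2)

lemma sT_mem_Ioi {h : ℝ} (h0 : 0 < h) (h1 : h < 1) : 1 < sT h := by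
  have hl := Real.log_lt_sub_one_of_pos h0 (ne_of_lt h1)
  rw [sT, lt_div_iff_of_neg (by linarith : h - 1 < 0)]
  linarith

lemma sT_mem_Ioo {h : ℝ} (h1 : 1 < h) : 0 < sT h ∧ sT h < 1 := by
  have hl := Real.log_lt_sub_one_of_pos (by linarith) (ne_of_gt h1)
  have hp : 0 < Real.log h := Real.log_pos h1
  constructor
  · exact div_pos hp (by linarith)
  · rw [sT, div_lt_one (by linarith : (0:ℝ) < h - 1)]; exact hl

lemma specht_eq {h : ℝ} (h0 : 0 < h) (h1 : h ≠ 1) : specht h = sF (sT h) := by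
  rw [specht, if_neg h1, sF, sT]
  rw [Real.rpow_def_of_pos h0, Real.log_exp]
  rw [Real.exp_sub]
  ring_nf

theorem specht_monotonicity :
    AntitoneOn specht (Set.Ioo (0:ℝ) 1) ∧ MonotoneOn specht (Set.Ioi (1:ℝ)) ∧
      specht 1 = 1 ∧ ∀ h : ℝ, 0 < h → h ≠ 1 → 1 < specht h := by
  refine ⟨?_, ?_, by simp [specht], ?_⟩
  · intro a ha b hb hab
    rcases eq_or_lt_of_le hab with rfl | hab
    · exact le_rfl
    rw [specht_eq ha.1 (ne_of_lt ha.2), specht_eq hb.1 (ne_of_lt hb.2)]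
    have htab : sT b < sT a := sT_anti_Ioo ha hb hab
    have h1b : 1 < sT b := sT_mem_Ioi hb.1 hb.2
    apply sF_le (by linarith) (by linarith)
    -- a := sT a, b := sT b; need sT a / sT b - 1 ≤ sT a - sT b
    have hb1 : 1 ≤ sT b := le_of_lt h1b
    have : sT a / sT b - 1 = (sT a - sT b) / sT b := by field_simp
    rw [this]
    rw [div_le_iff₀ (by linarith)]
    nlinarith
  · intro a ha b hb hab
    rcases eq_or_lt_of_le hab with rfl | hab
    · exact le_rfl
    rw [specht_eq (by linarith [Set.mem_Ioi.mp ha] : (0:ℝ) < a) (ne_of_gt ha),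
        specht_eq (by linarith [Set.mem_Ioi.mp hb] : (0:ℝ) < b) (ne_of_gt hb)]
    have htab : sT b < sT a := sT_anti_Ioi ha hb hab
    obtain ⟨hta0, hta1⟩ := sT_mem_Ioo (Set.mem_Ioi.mp ha)
    obtain ⟨htb0, htb1⟩ := sT_mem_Ioo (Set.mem_Ioi.mp hb)
    apply sF_le htb0 hta0
    have : sT b / sT a - 1 = (sT b - sT a) / sT a := by field_simp
    rw [this, div_le_iff₀ hta0]
    nlinarith
  · intro h h0 h1
    rw [specht_eq h0 h1]
    apply sF_gt_one
    · rcases lt_or_gt_of_ne h1 with hlt | hgt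
      · linarith [sT_mem_Ioi h0 hlt]
      · exact (sT_mem_Ioo hgt).1
    · rcases lt_or_gt_of_ne h1 with hlt | hgt
      · exact ne_of_gt (sT_mem_Ioi h0 hlt)
      · exact ne_of_lt (sT_mem_Ioo hgt).2
end

section
/- For positive reals a, b and ν ∈ [0,1] with r = min{ν, 1−ν} and ω = max{√a, √b}, we have ω · L(√a, √b) · log S(√(a/b)) ≥ (1−ν)a + νb − a^{1−ν} b^ν − r(√a − √b)², where L is the logarithmic mean and S is Specht's ratio. -/
/-- The logarithmic mean `L(x,y) = (y-x)/(log y - log x)` for `x ≠ y`, with `L(x,x) = x`. -/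
noncomputable def logMean (x y : ℝ) : ℝ :=
  if x = y then x else (y - x) / (Real.log y - Real.log x)

/-!
Put `m = L(A, B)`. Since `log (A/B) / (A/B - 1) = B / m`, Specht's ratio gives
`m log S(A/B) = B - m + m log m - m log B`, while the tangent line of `exp` at `log m` gives
`A^{1-μ} B^μ ≥ m (1 + log (A^{1-μ} B^μ) - log m)`. As `m (log B - log A) = B - A`, these combine to
`(1-μ) A + μ B - A^{1-μ} B^μ ≤ L(A, B) log S(A/B)` for every real `μ`.
For `ν ≤ 1/2` the left side of the theorem is this Young difference for `A = a`, `B = √(ab)`,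
`μ = 2ν`, and by homogeneity of `L` the right side becomes `√a L(√a, √b) log S(√(a/b))`;
the case `ν ≥ 1/2` follows by exchanging `a` and `b`, since `log S(1/h) = log S(h)`.
-/

open Real

lemma logMean_comm (x y : ℝ) : logMean x y = logMean y x := by
  unfold logMean
  rcases eq_or_ne x y with rfl | h
  · rfl
  · rw [if_neg h, if_neg h.symm, ← neg_sub x y, ← neg_sub (log x), neg_div_neg_eq]

lemma logMean_pos {x y : ℝ} (hx : 0 < x) (hy : 0 < y) : 0 < logMean x y := by
  unfold logMean
  split_ifs with h
  · exact hx
  · rcases lt_or_gt_of_ne h with hlt | hgt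
    · exact div_pos (sub_pos.2 hlt) (sub_pos.2 (log_lt_log hx hlt))
    · exact div_pos_of_neg_of_neg (sub_neg.2 hgt) (sub_neg.2 (log_lt_log hy hgt))

lemma logMean_mul_sub_log {x y : ℝ} (hx : 0 < x) (hy : 0 < y) :
    logMean x y * (log y - log x) = y - x := by
  unfold logMean
  split_ifs with h
  · simp [h]
  · have : log y - log x ≠ 0 :=
      sub_ne_zero.2 fun he => h (log_injOn_pos hx hy he.symm)
    exact div_mul_cancel₀ _ this

lemma logMean_mul_mul {c x y : ℝ} (hc : c ≠ 0) (hx : x ≠ 0) (hy : y ≠ 0) :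
    logMean (c * x) (c * y) = c * logMean x y := by
  unfold logMean
  rcases eq_or_ne x y with rfl | h
  · simp
  · rw [if_neg h, if_neg ((mul_right_injective₀ hc).ne h), log_mul hc hx, log_mul hc hy,
      ← mul_sub, mul_div_assoc]
    ring_nf

/-- Since `log h / (h - 1) = 1 / L(h, 1)`, the power `h^{1/(h-1)}` is `exp (1 / L(h, 1))`. -/
lemma log_specht {h : ℝ} (hh : 0 < h) :
    log (specht h) = (logMean h 1)⁻¹ - 1 + log (logMean h 1) := by
  have hm := logMean_pos hh one_pos
  rcases eq_or_ne h 1 with rfl | h1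
  · simp [specht, logMean]
  have hinv : log h / (h - 1) = (logMean h 1)⁻¹ := by
    have := logMean_mul_sub_log hh one_pos
    rw [log_one] at this
    field_simp
    linarith
  have hpow : h ^ ((1 : ℝ) / (h - 1)) = exp (logMean h 1)⁻¹ := by
    rw [rpow_def_of_pos hh, ← hinv]
    ring_nf
  rw [specht, if_neg h1, hpow, log_exp, log_div (exp_ne_zero _) (by positivity),
    log_mul (exp_ne_zero 1) (by positivity), log_exp, log_exp, log_inv]
  ring

lemma log_specht_nonneg {h : ℝ} (hh : 0 < h) : 0 ≤ log (specht h) := by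
  have hm := logMean_pos hh one_pos
  have := log_le_sub_one_of_pos (inv_pos.2 hm)
  rw [log_inv] at this
  rw [log_specht hh]
  linarith

lemma log_specht_inv {h : ℝ} (hh : 0 < h) : log (specht h⁻¹) = log (specht h) := by
  have hm := logMean_pos hh one_pos
  have hmul : logMean h⁻¹ 1 = h⁻¹ * logMean h 1 := by
    rw [logMean_comm h, ← logMean_mul_mul (inv_ne_zero hh.ne') one_ne_zero hh.ne',
      inv_mul_cancel₀ hh.ne', mul_one]
  have hlog : logMean h 1 * log h = h - 1 := by
    have := logMean_mul_sub_log one_pos hh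
    rw [log_one, sub_zero, logMean_comm] at this
    exact this
  rw [log_specht (inv_pos.2 hh), log_specht hh, hmul, log_mul (by positivity) hm.ne', log_inv,
    mul_inv, inv_inv]
  field_simp
  linarith

lemma young_diff_le_logMean_mul_log_specht {A B : ℝ} (hA : 0 < A) (hB : 0 < B) (μ : ℝ) :
    (1 - μ) * A + μ * B - A ^ (1 - μ) * B ^ μ ≤ logMean A B * log (specht (A / B)) := by
  set m := logMean A B
  set U := A ^ (1 - μ) * B ^ μ
  have hm : 0 < m := logMean_pos hA hB
  have hU : 0 < U := by positivity
  have hlogU : log U = (1 - μ) * log A + μ * log B := by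
    rw [log_mul (by positivity) (by positivity), log_rpow hA, log_rpow hB]
  have htangent : m * (log U - log m) ≤ U - m :=
    calc m * (log U - log m) = m * log (U / m) := by rw [log_div hU.ne' hm.ne']
      _ ≤ m * (U / m - 1) := by gcongr; exact log_le_sub_one_of_pos (div_pos hU hm)
      _ = U - m := by field_simp
  have hmlogU : m * log U = m * log B - (1 - μ) * (B - A) := by
    rw [hlogU]
    linear_combination (μ - 1) * logMean_mul_sub_log hA hB
  have hratio : logMean (A / B) 1 = m / B := by
    rw [div_eq_inv_mul, ← inv_mul_cancel₀ hB.ne', logMean_mul_mul (inv_ne_zero hB.ne') hA.ne'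
      hB.ne', inv_mul_eq_div]
  have hspecht : m * log (specht (A / B)) = B - m + m * log m - m * log B := by
    rw [log_specht (div_pos hA hB), hratio, log_div hm.ne' hB.ne', inv_div]
    field_simp
    ring
  rw [hspecht]
  linarith

lemma young_diff_sub_sq_le {a b : ℝ} (ha : 0 < a) (hb : 0 < b) (ν : ℝ) :
    (1 - ν) * a + ν * b - a ^ (1 - ν) * b ^ ν - ν * (√a - √b) ^ 2 ≤
      √a * logMean √a √b * log (specht √(a / b)) := by
  set x := √a
  set y := √b
  have hx : 0 < x := sqrt_pos.2 ha
  have hy : 0 < y := sqrt_pos.2 hb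
  have ha' : a = x * x := (mul_self_sqrt ha.le).symm
  have hb' : b = y * y := (mul_self_sqrt hb.le).symm
  have hgeom : a ^ (1 - ν) * b ^ ν = (x * x) ^ (1 - 2 * ν) * (x * y) ^ (2 * ν) := by
    simp only [ha', hb', rpow_def_of_pos, mul_pos, hx, hy, ← exp_add, log_mul hx.ne' hx.ne',
      log_mul hy.ne' hy.ne', log_mul hx.ne' hy.ne']
    ring_nf
  have hmean : logMean (x * x) (x * y) = x * logMean x y :=
    logMean_mul_mul hx.ne' hx.ne' hy.ne'
  have hratio : x * x / (x * y) = √(a / b) := by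
    rw [sqrt_div ha.le, mul_div_mul_left _ _ hx.ne']
  calc (1 - ν) * a + ν * b - a ^ (1 - ν) * b ^ ν - ν * (x - y) ^ 2
      = (1 - 2 * ν) * (x * x) + 2 * ν * (x * y) - (x * x) ^ (1 - 2 * ν) * (x * y) ^ (2 * ν) := by
        rw [hgeom, ha', hb']; ring
    _ ≤ logMean (x * x) (x * y) * log (specht (x * x / (x * y))) :=
        young_diff_le_logMean_mul_log_specht (by positivity) (by positivity) _
    _ = x * logMean x y * log (specht √(a / b)) := by rw [hmean, hratio]

theorem reverse_diff_refined_young_general (a b : ℝ) (ha : 0 < a) (hb : 0 < b)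
    (ν : ℝ) (r : ℝ) (hr : r = min ν (1 - ν))
    (ω : ℝ) (hω : ω = max (Real.sqrt a) (Real.sqrt b)) :
    (1 - ν) * a + ν * b - a ^ (1 - ν) * b ^ ν - r * (Real.sqrt a - Real.sqrt b) ^ 2 ≤
      ω * logMean (Real.sqrt a) (Real.sqrt b) * Real.log (specht (Real.sqrt (a / b))) := by
  have hK : 0 ≤ logMean √a √b * log (specht √(a / b)) :=
    mul_nonneg (logMean_pos (sqrt_pos.2 ha) (sqrt_pos.2 hb)).le
      (log_specht_nonneg (sqrt_pos.2 (div_pos ha hb)))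
  rcases le_total ν (1 - ν) with hν | hν
  · rw [hr, min_eq_left hν]
    calc _ ≤ √a * logMean √a √b * log (specht √(a / b)) := young_diff_sub_sq_le ha hb ν
      _ ≤ ω * logMean √a √b * log (specht √(a / b)) := by
          rw [mul_assoc, mul_assoc]; gcongr; exact hω ▸ le_max_left _ _
  · rw [hr, min_eq_right hν]
    calc _ = ν * b + (1 - ν) * a - b ^ ν * a ^ (1 - ν) - (1 - ν) * (√b - √a) ^ 2 := by ring
      _ ≤ √b * logMean √b √a * log (specht √(b / a)) := by
          simpa only [sub_sub_cancel] using young_diff_sub_sq_le hb ha (1 - ν)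
      _ = √b * logMean √a √b * log (specht √(a / b)) := by
          rw [logMean_comm, ← inv_div, sqrt_inv, log_specht_inv (sqrt_pos.2 (div_pos ha hb))]
      _ ≤ ω * logMean √a √b * log (specht √(a / b)) := by
          rw [mul_assoc, mul_assoc]; gcongr; exact hω ▸ le_max_right _ _

theorem reverse_diff_refined_young (a b : ℝ) (ha : 0 < a) (hb : 0 < b)
    (ν : ℝ) (hν : ν ∈ Set.Icc (0:ℝ) 1) (r : ℝ) (hr : r = min ν (1 - ν))
    (ω : ℝ) (hω : ω = max (Real.sqrt a) (Real.sqrt b)) :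
    (1 - ν) * a + ν * b - a ^ (1 - ν) * b ^ ν - r * (Real.sqrt a - Real.sqrt b) ^ 2 ≤
      ω * logMean (Real.sqrt a) (Real.sqrt b) * Real.log (specht (Real.sqrt (a / b))) :=
  reverse_diff_refined_young_general a b ha hb ν r hr ω hω
end

section
/- For all a, b > 0, log S(a/b) ≥ log S(√(a/b)), where S is Specht's ratio. -/
private lemma t_pos {h : ℝ} (hp : 0 < h) (hn : h ≠ 1) : 0 < Real.log h / (h - 1) := by
  rcases lt_or_gt_of_ne hn with h1 | h1
  · have : Real.log h < 0 := Real.log_neg hp h1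
    exact div_pos_of_neg_of_neg this (by linarith)
  · exact div_pos (Real.log_pos h1) (by linarith)

private lemma log_specht_eq {h : ℝ} (hp : 0 < h) (hn : h ≠ 1) :
    Real.log (specht h) =
      Real.log h / (h - 1) - 1 - Real.log (Real.log h / (h - 1)) := by
  have ht : 0 < Real.log h / (h - 1) := t_pos hp hn
  have hr : h ^ ((1:ℝ)/(h-1)) = Real.exp (Real.log h / (h - 1)) := by
    rw [Real.rpow_def_of_pos hp]
    ring_nf
  have hlr : Real.log (h ^ ((1:ℝ)/(h-1))) = Real.log h / (h - 1) := by
    rw [hr, Real.log_exp]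
  rw [specht, if_neg hn, hlr, hr, Real.log_div (Real.exp_ne_zero _)
    (mul_ne_zero (Real.exp_ne_zero _) (ne_of_gt ht)),
    Real.log_mul (Real.exp_ne_zero _) (ne_of_gt ht), Real.log_exp, Real.log_exp]
  ring

private lemma f_mono {s t : ℝ} (hs : 1 ≤ s) (hst : s ≤ t) :
    s - 1 - Real.log s ≤ t - 1 - Real.log t := by
  have hs0 : 0 < s := by linarith
  have ht0 : 0 < t := by linarith
  have h1 : Real.log t - Real.log s = Real.log (t / s) := (Real.log_div (ne_of_gt ht0) (ne_of_gt hs0)).symm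
  have h2 : Real.log (t / s) ≤ t / s - 1 := Real.log_le_sub_one_of_pos (div_pos ht0 hs0)
  have h3 : t / s - 1 ≤ t - s := by
    rw [div_sub_one (ne_of_gt hs0), div_le_iff₀ hs0]
    nlinarith
  linarith
private lemma f_anti {s t : ℝ} (hs : 0 < s) (hst : s ≤ t) (ht : t ≤ 1) :
    t - 1 - Real.log t ≤ s - 1 - Real.log s := by
  have ht0 : 0 < t := by linarith
  have h1 : Real.log s - Real.log t = Real.log (s / t) := (Real.log_div (ne_of_gt hs) (ne_of_gt ht0)).symm
  have h2 : Real.log (s / t) ≤ s / t - 1 := Real.log_le_sub_one_of_pos (div_pos hs ht0)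
  have h3 : s / t - 1 ≤ (s - t) / t := by
    rw [div_sub_one (ne_of_gt ht0)]
  have h4 : (s - t) / t ≤ 0 := div_nonpos_of_nonpos_of_nonneg (by linarith) (le_of_lt ht0)
  have h5 : (s - t) / t ≤ s - t := by
    rw [div_le_iff₀ ht0]
    nlinarith
  linarith

theorem log_specht_sqrt_le (a b : ℝ) (ha : 0 < a) (hb : 0 < b) :
    Real.log (specht (Real.sqrt (a / b))) ≤ Real.log (specht (a / b)) := by
  set h := a / b with hh
  have hp : 0 < h := div_pos ha hb
  by_cases hn : h = 1
  · rw [hn, Real.sqrt_one]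
  · set x := Real.sqrt h with hx
    have hx0 : 0 < x := Real.sqrt_pos.mpr hp
    have hx2 : x ^ 2 = h := Real.sq_sqrt hp.le
    have hxn : x ≠ 1 := by
      intro hc
      apply hn
      rw [← hx2, hc]; norm_num
    have hlog : Real.log h = 2 * Real.log x := by
      rw [← hx2, Real.log_pow]; push_cast; ring
    have hxm1 : x - 1 ≠ 0 := sub_ne_zero.mpr hxn
    have hxp1 : 0 < x + 1 := by linarith
    have hkey : Real.log h / (h - 1) = (Real.log x / (x - 1)) * (2 / (x + 1)) := by
      have hd : x ^ 2 - 1 ≠ 0 := by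
        have : x ^ 2 - 1 = (x - 1) * (x + 1) := by ring
        rw [this]
        exact mul_ne_zero hxm1 (ne_of_gt hxp1)
      rw [hlog, ← hx2]
      field_simp
      ring
    rw [log_specht_eq hp hn, log_specht_eq hx0 hxn, hkey]
    set s := Real.log x / (x - 1) with hs
    have hs0 : 0 < s := t_pos hx0 hxn
    rcases lt_or_gt_of_ne hxn with h1 | h1
    · -- x < 1 : s > 1, and s ≤ s * (2/(x+1))
      have hs1 : 1 ≤ s := by
        have hlx : Real.log x < x - 1 := Real.log_lt_sub_one_of_pos hx0 hxn
        rw [hs, le_div_iff_of_neg (by linarith : x - 1 < 0)]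
        linarith
      have hfac : 1 ≤ 2 / (x + 1) := by
        rw [le_div_iff₀ hxp1]; linarith
      have hst : s ≤ s * (2 / (x + 1)) := le_mul_of_one_le_right hs0.le hfac
      exact f_mono hs1 hst
    · -- x > 1 : s < 1, and s * (2/(x+1)) ≤ s
      have hs1 : s ≤ 1 := by
        have hlx : Real.log x < x - 1 := Real.log_lt_sub_one_of_pos hx0 hxn
        rw [hs, div_le_one (by linarith : 0 < x - 1)]
        linarith
      have hfac : 2 / (x + 1) ≤ 1 := by
        rw [div_le_one hxp1]; linarith
      have hst : s * (2 / (x + 1)) ≤ s := mul_le_of_le_one_right hs0.le hfac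
      have hst0 : 0 < s * (2 / (x + 1)) := mul_pos hs0 (div_pos two_pos hxp1)
      exact f_anti hst0 hst hs1
end

section
/- Let a₁,…,aₙ ≥ 0 and p₁,…,pₙ > 0 with Σ pᵢ = 1, and let λ = min{p₁,…,pₙ}. Then Σ pᵢ aᵢ − Π aᵢ^{pᵢ} ≥ nλ ( (1/n) Σ aᵢ − Π aᵢ^{1/n} ), refining the weighted AM–GM inequality. -/
/-!
The map `w ↦ ∑ wᵢ aᵢ - ∏ aᵢ ^ wᵢ` is concave in the weights (`∏ aᵢ ^ wᵢ = exp (∑ wᵢ log aᵢ)`)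
and nonnegative on probability vectors. Since every `pᵢ ≥ λ`, the weight vector `p` splits as
`nλ` times the uniform weights plus the nonnegative remainder `r = p - λ`, and the remainder
contributes a nonnegative amount. Concretely, `∏ aᵢ ^ pᵢ = G ^ (nλ) * ∏ aᵢ ^ rᵢ` with `G` the
unweighted geometric mean, and one application of weighted AM–GM to the values `G, a₁, …, aₙ`
with weights `nλ, r₁, …, rₙ` gives the claim.
-/

open Finset

namespace Real

variable {ι : Type*} [Fintype ι]

theorem rpow_mul_prod_rpow_le_mul_add_sum {t x : ℝ} {w z : ι → ℝ} (ht : 0 ≤ t)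
    (hw : ∀ i, 0 ≤ w i) (htw : t + ∑ i, w i = 1) (hx : 0 ≤ x) (hz : ∀ i, 0 ≤ z i) :
    x ^ t * ∏ i, z i ^ w i ≤ t * x + ∑ i, w i * z i := by
  have h := geom_mean_le_arith_mean_weighted univ (fun o => Option.elim o t w)
    (fun o => Option.elim o x z) (fun o _ => by cases o <;> simp [ht, hw])
    (by simpa [Fintype.sum_option] using htw) (fun o _ => by cases o <;> simp [hx, hz])
  simpa only [Fintype.prod_option, Fintype.sum_option, Option.elim] using h

theorem mul_sub_geom_mean_le_sub_geom_mean {t : ℝ} {u r a : ι → ℝ} (ht : 0 ≤ t)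
    (hu : ∀ i, 0 ≤ u i) (hr : ∀ i, 0 ≤ r i) (htr : t + ∑ i, r i = 1) (ha : ∀ i, 0 ≤ a i) :
    t * (∑ i, u i * a i - ∏ i, a i ^ u i) ≤
      ∑ i, (t * u i + r i) * a i - ∏ i, a i ^ (t * u i + r i) := by
  have hsplit : ∏ i, a i ^ (t * u i + r i) = (∏ i, a i ^ u i) ^ t * ∏ i, a i ^ r i := by
    rw [← finsetProd_rpow _ _ fun i _ => rpow_nonneg (ha i) _, ← prod_mul_distrib]
    refine prod_congr rfl fun i _ => ?_
    rw [← rpow_mul (ha i), mul_comm (u i),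
      rpow_add_of_nonneg (ha i) (mul_nonneg ht (hu i)) (hr i)]
  have hamgm := rpow_mul_prod_rpow_le_mul_add_sum ht hr htr
    (x := ∏ i, a i ^ u i) (prod_nonneg fun i _ => rpow_nonneg (ha i) _) ha
  simp only [add_mul, sum_add_distrib, mul_assoc, ← mul_sum]
  linarith

end Real

theorem refined_weighted_am_gm_general (n : ℕ) (a p : Fin n → ℝ)
    (ha : ∀ i, 0 ≤ a i) (hp : ∀ i, 0 < p i) (hsum : ∑ i, p i = 1)
    (lam : ℝ) (hmem : ∃ i, p i = lam) (hle : ∀ i, lam ≤ p i) :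
    (n : ℝ) * lam * ((1 / (n : ℝ)) * ∑ i, a i - ∏ i, a i ^ ((1:ℝ) / (n : ℝ))) ≤
      ∑ i, p i * a i - ∏ i, a i ^ p i := by
  obtain ⟨i₀, rfl⟩ := hmem
  have hn : (n : ℝ) ≠ 0 := Nat.cast_ne_zero.mpr i₀.pos.ne'
  have hp_eq : ∀ i, (n : ℝ) * p i₀ * (1 / n) + (p i - p i₀) = p i := fun i => by
    field_simp; ring
  have h := Real.mul_sub_geom_mean_le_sub_geom_mean (u := fun _ => 1 / (n : ℝ))
    (mul_nonneg n.cast_nonneg (hp i₀).le) (fun _ => by positivity)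
    (fun i => sub_nonneg.mpr (hle i))
    (by simp [sum_sub_distrib, hsum]) ha
  simpa only [hp_eq, ← mul_sum] using h

open Finset in
theorem refined_weighted_am_gm (n : ℕ) (hn : 1 ≤ n) (a p : Fin n → ℝ)
    (ha : ∀ i, 0 ≤ a i) (hp : ∀ i, 0 < p i) (hsum : ∑ i, p i = 1)
    (lam : ℝ) (hmem : ∃ i, p i = lam) (hle : ∀ i, lam ≤ p i) :
    (n : ℝ) * lam * ((1 / (n : ℝ)) * ∑ i, a i - ∏ i, a i ^ ((1:ℝ) / (n : ℝ))) ≤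
      ∑ i, p i * a i - ∏ i, a i ^ p i :=
  refined_weighted_am_gm_general n a p ha hp hsum lam hmem hle
end
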